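/- The join of modalities is a least upper bound when it exists: if μ ∨_F ν is defined, then μ_F ⇒ (μ∨_F ν)_F and ν_F ⇒ (μ∨_F ν)_F; and for any ζ with μ_F ⇒ ζ_F and ν_F ⇒ ζ_F, (μ∨_F ν)_F ⇒ ζ_F. -/
import Mathlib


namespace MET

/-! Mode theory of Modal Effect Types (Tang et al.).
Effect contexts are scoped rows: for each label, an infinite sequence of
presence types with (intended) cofinitely many absent entries. -/

/-- Operation signatures (abstract). -/
abbrev Sig := ℕ
/-- Effect labels. -/
abbrev Label := ℕ
/-- Presence types: `none` is absent `−`, `some s` an operation arrow `A ↠ B`. -/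
abbrev Presence := Option Sig
/-- Effect contexts: for each label, the sequence of presence types of its occurrences. -/
abbrev Ctx := Label → ℕ → Presence
/-- Masks: a multiset of labels, as a count per label. -/
abbrev Mask := Label → ℕ
/-- Extensions: a finite row of presence types per label. -/
abbrev Ext := Label → List Presence

/-- Prepend an extension to an effect context: `D + E`. -/
def addExt (D : Ext) (E : Ctx) : Ctx := fun ℓ n =>
  if h : n < (D ℓ).length then (D ℓ)[n]'h else E ℓ (n - (D ℓ).length)

/-- Remove masked labels from the left: `E − L`. -/
def subMask (E : Ctx) (L : Mask) : Ctx := fun ℓ n => E ℓ (n + L ℓ)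

/-- Modalities: absolute `[E]` or relative `⟨L|D⟩`. -/
inductive Mod where
  | abs (E : Ctx)
  | rel (L : Mask) (D : Ext)

/-- Action of a modality on an effect context: `[E](F) = E`, `⟨L|D⟩(F) = D + (F − L)`. -/
def act : Mod → Ctx → Ctx
  | .abs E, _ => E
  | .rel L D, F => addExt D (subMask F L)

/-- `L ⋈ D`: leftover mask after cancelling against the extension. -/
def bowtieL (L : Mask) (D : Ext) : Mask := fun ℓ => L ℓ - (D ℓ).length
/-- `L ⋈ D`: leftover extension after cancelling against the mask. -/
def bowtieD (L : Mask) (D : Ext) : Ext := fun ℓ => (D ℓ).drop (L ℓ)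

/-- Modality composition `μ ∘ ν`:
`μ∘[E] = [E]`, `[E]∘⟨L|D⟩ = [D+(E−L)]`,
`⟨L₁|D₁⟩∘⟨L₂|D₂⟩ = ⟨L₁+L | D₂+D⟩` where `(L,D) = L₂ ⋈ D₁`. -/
def Mod.comp : Mod → Mod → Mod
  | _, .abs E => .abs E
  | .abs E, .rel L D => .abs (addExt D (subMask E L))
  | .rel L₁ D₁, .rel L₂ D₂ =>
      .rel (fun ℓ => L₁ ℓ + bowtieL L₂ D₁ ℓ) (fun ℓ => D₂ ℓ ++ bowtieD L₂ D₁ ℓ)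

/-- The identity relative modality `⟨⟩ = ⟨·|·⟩`. -/
def idMod : Mod := .rel (fun _ => 0) (fun _ => [])

/-- Subtyping of presence types: absent can be upcast to any operation arrow. -/
def ple : Presence → Presence → Prop
  | none, _ => True
  | some s, some s' => s = s'
  | some _, none => False

/-- Subeffecting `E ≤ F`. -/
def cle (E F : Ctx) : Prop := ∀ ℓ n, ple (E ℓ n) (F ℓ n)

/-- The empty effect context `·`. -/
def emptyCtx : Ctx := fun _ _ => none

/-- Subtyping of extensions: same labels, pointwise upcast of presence types. -/
def extLE (D D' : Ext) : Prop := ∀ ℓ, List.Forall₂ ple (D ℓ) (D' ℓ)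

/-- Add one occurrence of `ℓ` to a mask: `ℓ, L`. -/
def addMask (ℓ : Label) (L : Mask) : Mask := fun ℓ' => if ℓ' = ℓ then L ℓ' + 1 else L ℓ'
/-- Append one entry `ℓ : P` to an extension: `D, ℓ:P`. -/
def appendExt (ℓ : Label) (P : Presence) (D : Ext) : Ext :=
  fun ℓ' => if ℓ' = ℓ then D ℓ' ++ [P] else D ℓ'

/-- The syntactic modality transformation relation `μ_F ⇒ ν_F`, generated by
the rules Abs, Upcast, Expand, Shrink and closed under transitivity. -/
inductive MTrans : Mod → Mod → Ctx → Prop where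
  | abs {E : Ctx} {μ : Mod} {F : Ctx} :
      cle E (act μ F) → MTrans (.abs E) μ F
  | upcast {L : Mask} {D D' : Ext} {F : Ctx} :
      extLE D D' → MTrans (.rel L D) (.rel L D') F
  | expand {L : Mask} {D : Ext} {F : Ctx} {ℓ : Label} {s : Sig} :
      subMask F L ℓ 0 = some s →
      MTrans (.rel L D) (.rel (addMask ℓ L) (appendExt ℓ (some s) D)) F
  | shrink {L : Mask} {D : Ext} {F : Ctx} {ℓ : Label} {P : Presence} :
      subMask F L ℓ 0 = P →
      MTrans (.rel (addMask ℓ L) (appendExt ℓ P D)) (.rel L D) F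
  | trans {μ ν ξ : Mod} {F : Ctx} :
      MTrans μ ν F → MTrans ν ξ F → MTrans μ ξ F

/-- Semantic modality transformation at a common index `F`. -/
def MTransSem (μ ν : Mod) (F : Ctx) : Prop :=
  ∀ G, cle F G → cle (act μ G) (act ν G)

/-- Generalized (double-categorical) transformation `μ_F ⇒ ν_{F'}` with `F ≤ F'`. -/
def GTrans (μ : Mod) (F : Ctx) (ν : Mod) (F' : Ctx) : Prop :=
  cle F F' ∧ MTransSem μ ν F'

attribute [local instance] Classical.propDecidable

noncomputable section

/-- Partial join of presence types, with absent `−` as bottom. -/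
def pjoin : Presence → Presence → Option Presence
  | none, p => some p
  | some s, none => some (some s)
  | some s, some s' => if s = s' then some (some s) else none

/-- Partial pointwise join of effect contexts `E ∨ E'`. -/
def ctxJoin (E E' : Ctx) : Option Ctx :=
  if h : ∀ ℓ n, (pjoin (E ℓ n) (E' ℓ n)).isSome then
    some (fun ℓ n => (pjoin (E ℓ n) (E' ℓ n)).get (h ℓ n))
  else none

/-- Partial join `D ∨ E` of an extension against the corresponding labels of a
context: an extension based on `D` with presence types joined against `E`. -/
def extCtxJoin (D : Ext) (E : Ctx) : Option Ext :=
  if h : ∀ ℓ, ∀ i : Fin (D ℓ).length, (pjoin ((D ℓ).get i) (E ℓ i)).isSome then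
    some (fun ℓ => List.ofFn
      (fun i : Fin (D ℓ).length => (pjoin ((D ℓ).get i) (E ℓ i)).get (h ℓ i)))
  else none

/-- Multiset intersection of masks `L ∩ L'`. -/
def maskInter (L L' : Mask) : Mask := fun ℓ => min (L ℓ) (L' ℓ)

/-- Partial meet `D ∧ D'` of extensions: keep only labels present in both,
joining their presence types. -/
def extMeet (D D' : Ext) : Option Ext :=
  if h : ∀ ℓ, ((List.zipWith pjoin (D ℓ) (D' ℓ)).mapM id).isSome then
    some (fun ℓ => ((List.zipWith pjoin (D ℓ) (D' ℓ)).mapM id).get (h ℓ))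
  else none

/-- The partial join of modalities `μ ∨_F ν`:
`[E] ∨_F [E'] = [E ∨ E']`;
`[E] ∨_F ⟨L|D⟩ = ⟨L | D∨E⟩` provided `E ≤ (D∨E)+(F−L)` (and symmetrically);
`⟨L|D⟩ ∨_F ⟨L'|D'⟩ = ⟨L∩L' | D∧D'⟩` provided both modalities transform into it. -/
def joinMod (μ : Mod) (F : Ctx) (ν : Mod) : Option Mod :=
  match μ, ν with
  | .abs E, .abs E' => (ctxJoin E E').map Mod.abs
  | .abs E, .rel L D =>
      match extCtxJoin D E with
      | some D' =>
          if cle E (addExt D' (subMask F L)) then some (.rel L D') else none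
      | none => none
  | .rel L D, .abs E =>
      match extCtxJoin D E with
      | some D' =>
          if cle E (addExt D' (subMask F L)) then some (.rel L D') else none
      | none => none
  | .rel L D, .rel L' D' =>
      match extMeet D D' with
      | some D'' =>
          if MTransSem (.rel L D) (.rel (maskInter L L') D'') F ∧
             MTransSem (.rel L' D') (.rel (maskInter L L') D'') F
          then some (.rel (maskInter L L') D'') else none
      | none => none

/-! ### Auxiliary lemmas -/

lemma ple_refl (p : Presence) : ple p p := by cases p <;> simp [ple]

lemma ple_trans {a b c : Presence} (h1 : ple a b) (h2 : ple b c) : ple a c := by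
  cases a <;> cases b <;> cases c <;> simp_all [ple]

lemma ple_some {s : Sig} {p : Presence} (h : ple (some s) p) : p = some s := by
  cases p <;> simp_all [ple]

lemma pjoin_le {a b c : Presence} (h : pjoin a b = some c) : ple a c ∧ ple b c := by
  cases a <;> cases b
  · simp only [pjoin, Option.some_inj] at h; subst h; exact ⟨trivial, trivial⟩
  · simp only [pjoin, Option.some_inj] at h; subst h; exact ⟨trivial, ple_refl _⟩
  · simp only [pjoin, Option.some_inj] at h; subst h; exact ⟨ple_refl _, trivial⟩
  · simp only [pjoin] at h
    split at h
    · rename_i hs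
      simp only [Option.some_inj] at h
      subst h; subst hs
      exact ⟨ple_refl _, ple_refl _⟩
    · simp at h

lemma pjoin_lub {a b c x : Presence} (h : pjoin a b = some c)
    (ha : ple a x) (hb : ple b x) : ple c x := by
  cases a <;> cases b
  · simp only [pjoin, Option.some_inj] at h; subst h; exact hb
  · simp only [pjoin, Option.some_inj] at h; subst h; exact hb
  · simp only [pjoin, Option.some_inj] at h; subst h; exact ha
  · simp only [pjoin] at h
    split at h
    · simp only [Option.some_inj] at h
      subst h
      exact ha
    · simp at h

lemma cle_trans {E F G : Ctx} (h1 : cle E F) (h2 : cle F G) : cle E G :=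
  fun ℓ n => ple_trans (h1 ℓ n) (h2 ℓ n)

lemma addExt_lt {D : Ext} {E : Ctx} {ℓ n : ℕ} (h : n < (D ℓ).length) :
    addExt D E ℓ n = (D ℓ)[n]'h := dif_pos h

lemma addExt_ge {D : Ext} {E : Ctx} {ℓ n : ℕ} (h : ¬ n < (D ℓ).length) :
    addExt D E ℓ n = E ℓ (n - (D ℓ).length) := dif_neg h

lemma addExt_mono {D : Ext} {E E' : Ctx} (h : cle E E') :
    cle (addExt D E) (addExt D E') := by
  intro ℓ n
  by_cases hn : n < (D ℓ).length
  · rw [addExt_lt hn, addExt_lt hn]; exact ple_refl _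
  · rw [addExt_ge hn, addExt_ge hn]; exact h _ _

lemma subMask_mono {E E' : Ctx} {L : Mask} (h : cle E E') :
    cle (subMask E L) (subMask E' L) := fun ℓ n => h ℓ _

/-- Update a context at one position. -/
def upd (F : Ctx) (ℓ i : ℕ) (p : Presence) : Ctx :=
  fun ℓ' n => if ℓ' = ℓ ∧ n = i then p else F ℓ' n

lemma cle_upd {F : Ctx} {ℓ i : ℕ} {s : Sig} (h : F ℓ i = none) :
    cle F (upd F ℓ i (some s)) := by
  intro ℓ' n
  unfold upd
  split
  · rename_i hc; rw [hc.1, hc.2, h]; trivial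
  · exact ple_refl _

/-- Key semantic rigidity lemma: if every `G ≥ F` satisfies a pointwise
inequality between two positions, then at every `G ≥ F` the two positions
agree. -/
lemma key_eq {F : Ctx} {ℓ i k : ℕ}
    (H : ∀ G, cle F G → ple (G ℓ i) (G ℓ k)) :
    ∀ G, cle F G → G ℓ i = G ℓ k := by
  by_cases hik : i = k
  · intro G _; rw [hik]
  · -- first show `F ℓ i = some s` for some `s`
    have hFi : ∃ s, F ℓ i = some s := by
      by_contra hno
      push_neg at hno
      have hnone : F ℓ i = none := by
        cases hFi : F ℓ i with
        | none => rfl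
        | some s => exact absurd hFi (hno s)
      have h0 := H (upd F ℓ i (some 0)) (cle_upd hnone)
      have h1 := H (upd F ℓ i (some 1)) (cle_upd hnone)
      have e0i : upd F ℓ i (some 0) ℓ i = some 0 := if_pos ⟨rfl, rfl⟩
      have e1i : upd F ℓ i (some 1) ℓ i = some 1 := if_pos ⟨rfl, rfl⟩
      have ek : ∀ s : Sig, upd F ℓ i (some s) ℓ k = F ℓ k :=
        fun s => if_neg (fun hc => hik hc.2.symm)
      unfold upd at h0 h1 e0i e1i ek
      rw [e0i, ek] at h0
      rw [e1i, ek] at h1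
      rw [ple_some h1] at h0
      simp [ple] at h0
    obtain ⟨s, hFi⟩ := hFi
    have hFk : F ℓ k = some s := by
      have := H F (fun _ _ => ple_refl _)
      rw [hFi] at this
      exact ple_some this
    intro G hFG
    have hGi : G ℓ i = some s := ple_some (by rw [← hFi]; exact hFG ℓ i)
    have hGk : G ℓ k = some s := ple_some (by rw [← hFk]; exact hFG ℓ k)
    rw [hGi, hGk]

lemma mapM_id_forall₂ :
    ∀ {l : List (Option Presence)} {l' : List Presence},
    l.mapM id = some l' → List.Forall₂ (fun o x => o = some x) l l'
  | [], l', h => by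
      have : l' = [] := by
        have h' : (some [] : Option (List Presence)) = some l' := h
        exact (Option.some_inj.mp h').symm
      subst this
      exact List.Forall₂.nil
  | a :: t, l', h => by
      rw [List.mapM_cons] at h
      cases a with
      | none =>
        have h' : (none : Option (List Presence)) = some l' := h
        simp at h'
      | some x =>
        cases ht : t.mapM id with
        | none =>
          rw [ht] at h
          have h' : (none : Option (List Presence)) = some l' := h
          simp at h'
        | some t' =>
          rw [ht] at h
          have h' : some (x :: t') = some l' := h
          injection h' with h'
          subst h'
          exact List.Forall₂.cons rfl (mapM_id_forall₂ ht)

lemma extMeet_spec {D D' D'' : Ext} (h : extMeet D D' = some D'') (ℓ : Label) :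
    (List.zipWith pjoin (D ℓ) (D' ℓ)).mapM id = some (D'' ℓ) := by
  unfold extMeet at h
  split at h
  · rename_i hall
    simp only [Option.some_inj] at h
    subst h
    exact (Option.some_get (hall ℓ)).symm ▸ rfl
  · simp at h

lemma extCtxJoin_len {D : Ext} {E : Ctx} {D' : Ext}
    (h : extCtxJoin D E = some D') (ℓ : Label) :
    (D' ℓ).length = (D ℓ).length := by
  unfold extCtxJoin at h
  split at h
  · simp only [Option.some_inj] at h
    subst h
    simp
  · simp at h

lemma extCtxJoin_get {D : Ext} {E : Ctx} {D' : Ext}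
    (h : extCtxJoin D E = some D') (ℓ : Label) (i : ℕ) (hi : i < (D ℓ).length) :
    pjoin ((D ℓ)[i]'hi) (E ℓ i)
      = some ((D' ℓ)[i]'((extCtxJoin_len h ℓ).symm ▸ hi)) := by
  have h' := h
  unfold extCtxJoin at h'
  split at h'
  · rename_i hall
    simp only [Option.some_inj] at h'
    subst h'
    simp only [List.getElem_ofFn]
    rw [Option.some_get]
    rfl
  · simp at h'

lemma ctxJoin_spec {E E' C : Ctx} (h : ctxJoin E E' = some C) (ℓ n : ℕ) :
    pjoin (E ℓ n) (E' ℓ n) = some (C ℓ n) := by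
  unfold ctxJoin at h
  split at h
  · rename_i hall
    simp only [Option.some_inj] at h
    subst h
    simp [Option.some_get]
  · simp at h

/-- The abs/rel case, shared between the two symmetric branches. -/
lemma absRel_case {E : Ctx} {L : Mask} {D D' : Ext} {F : Ctx}
    (hJ : extCtxJoin D E = some D')
    (hle : cle E (addExt D' (subMask F L))) :
    MTransSem (.abs E) (.rel L D') F ∧ MTransSem (.rel L D) (.rel L D') F ∧
      ∀ ζ : Mod, MTransSem (.abs E) ζ F → MTransSem (.rel L D) ζ F →
        MTransSem (.rel L D') ζ F := by
  have hlen : ∀ ℓ, (D' ℓ).length = (D ℓ).length := fun ℓ => extCtxJoin_len hJ ℓ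
  have hget := fun ℓ => extCtxJoin_get hJ ℓ
  refine ⟨?_, ?_, ?_⟩
  · -- E ⇒ ⟨L|D'⟩
    intro G hFG
    exact cle_trans hle (addExt_mono (subMask_mono hFG))
  · -- ⟨L|D⟩ ⇒ ⟨L|D'⟩
    intro G _ ℓ n
    simp only [act]
    by_cases hn : n < (D ℓ).length
    · rw [addExt_lt hn, addExt_lt (by rw [hlen]; exact hn)]
      exact (pjoin_le (hget ℓ n hn)).1
    · rw [addExt_ge hn, addExt_ge (by rw [hlen]; exact hn), hlen]
      exact ple_refl _
  · -- least upper bound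
    intro ζ hμ hν G hFG ℓ n
    have hμ' := hμ G hFG ℓ n
    have hν' := hν G hFG ℓ n
    simp only [act] at hμ' hν' ⊢
    by_cases hn : n < (D ℓ).length
    · rw [addExt_lt (show n < (D' ℓ).length by rw [hlen]; exact hn)]
      rw [addExt_lt hn] at hν'
      exact pjoin_lub (hget ℓ n hn) hν' hμ'
    · rw [addExt_ge (by rw [hlen]; exact hn), hlen]
      rw [addExt_ge hn] at hν'
      exact hν'

/-- when defined, the join of modalities is a least upper bound
for the transformation relation at index `F`. -/
theorem joinMod_is_lub (μ ν : Mod) (F : Ctx) (j : Mod)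
    (h : joinMod μ F ν = some j) :
    MTransSem μ j F ∧ MTransSem ν j F ∧
      ∀ ζ : Mod, MTransSem μ ζ F → MTransSem ν ζ F → MTransSem j ζ F := by
  match μ, ν with
  | .abs E, .abs E' =>
    simp only [joinMod] at h
    cases hC : ctxJoin E E' with
    | none => rw [hC] at h; simp at h
    | some C =>
      rw [hC] at h
      simp only [Option.map_some, Option.some_inj] at h
      subst h
      have hspec := ctxJoin_spec hC
      refine ⟨?_, ?_, ?_⟩
      · intro G _ ℓ n; exact (pjoin_le (hspec ℓ n)).1
      · intro G _ ℓ n; exact (pjoin_le (hspec ℓ n)).2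
      · intro ζ hμ hν G hFG ℓ n
        exact pjoin_lub (hspec ℓ n) (hμ G hFG ℓ n) (hν G hFG ℓ n)
  | .abs E, .rel L D =>
    simp only [joinMod] at h
    split at h
    · rename_i D' hJ
      split at h
      · rename_i hle
        injection h with h
        subst h
        obtain ⟨h1, h2, h3⟩ := absRel_case hJ hle
        exact ⟨h1, h2, fun ζ hμ hν => h3 ζ hμ hν⟩
      · simp at h
    · simp at h
  | .rel L D, .abs E =>
    simp only [joinMod] at h
    split at h
    · rename_i D' hJ
      split at h
      · rename_i hle
        injection h with h
        subst h
        obtain ⟨h1, h2, h3⟩ := absRel_case hJ hle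
        exact ⟨h2, h1, fun ζ hμ hν => h3 ζ hν hμ⟩
      · simp at h
    · simp at h
  | .rel L D, .rel L' D' =>
    simp only [joinMod] at h
    split at h
    · rename_i D'' hM
      split at h
      · rename_i hcond
        obtain ⟨hμj, hνj⟩ := hcond
        injection h with h
        subst h
        refine ⟨hμj, hνj, ?_⟩
        intro ζ hμζ hνζ G hFG ℓ n
        have hf₂ := mapM_id_forall₂ (extMeet_spec hM ℓ)
        have hlen : (D'' ℓ).length = min (D ℓ).length ((D' ℓ).length) := by
          rw [← hf₂.length_eq, List.length_zipWith]
        simp only [act]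
        by_cases hn : n < (D'' ℓ).length
        · -- within the meet extension
          have hnD : n < (D ℓ).length := lt_of_lt_of_le (hlen ▸ hn) (min_le_left _ _)
          have hnD' : n < (D' ℓ).length := lt_of_lt_of_le (hlen ▸ hn) (min_le_right _ _)
          rw [addExt_lt hn]
          have hz : pjoin ((D ℓ)[n]'hnD) ((D' ℓ)[n]'hnD') = some ((D'' ℓ)[n]'hn) := by
            have hfg := (List.forall₂_iff_get.mp hf₂).2 n
              (by simp only [List.length_zipWith]; omega) hn
            simpa [List.get_eq_getElem, List.getElem_zipWith] using hfg
          have hμ' := hμζ G hFG ℓ n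
          have hν' := hνζ G hFG ℓ n
          simp only [act] at hμ' hν'
          rw [addExt_lt hnD] at hμ'
          rw [addExt_lt hnD'] at hν'
          exact pjoin_lub hz hμ' hν'
        · -- beyond the meet extension
          rw [addExt_ge hn]
          have hcase : ¬ n < (D ℓ).length ∨ ¬ n < (D' ℓ).length := by
            by_contra hc; push_neg at hc; omega
          cases hcase with
          | inl hnD =>
            have hμ' := hμζ G hFG ℓ n
            simp only [act] at hμ'
            rw [addExt_ge hnD] at hμ'
            have H : ∀ G', cle F G' →
                ple (G' ℓ (n - (D ℓ).length + L ℓ))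
                  (G' ℓ (n - (D'' ℓ).length + maskInter L L' ℓ)) := by
              intro G' hG'
              have := hμj G' hG' ℓ n
              simp only [act] at this
              rw [addExt_ge hnD, addExt_ge hn] at this
              exact this
            have heq := key_eq H G hFG
            simp only [subMask] at hμ' ⊢
            rw [← heq]
            exact hμ'
          | inr hnD' =>
            have hν' := hνζ G hFG ℓ n
            simp only [act] at hν'
            rw [addExt_ge hnD'] at hν'
            have H : ∀ G', cle F G' →
                ple (G' ℓ (n - (D' ℓ).length + L' ℓ))
                  (G' ℓ (n - (D'' ℓ).length + maskInter L L' ℓ)) := by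
              intro G' hG'
              have := hνj G' hG' ℓ n
              simp only [act] at this
              rw [addExt_ge hnD', addExt_ge hn] at this
              exact this
            have heq := key_eq H G hFG
            simp only [subMask] at hν' ⊢
            rw [← heq]
            exact hν'
      · simp at h
    · simp at h

end

end MET
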